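/- arXiv:1708.00608 — 3 statements merged into one kernel-verified Lean document; each statement's English description precedes it below -/
import Mathlib

section
/- Let A be a subset of a real separable Hilbert space H that can be covered by a Hilbert–Schmidt brick, and let C ⊆ H be a bounded set contained in a finite-dimensional subspace of H. Then the Minkowski sum A + C can be covered by a Hilbert–Schmidt brick. -/
open scoped RealInnerProductSpace Pointwise

/-- `A ⊆ H` can be covered by a Hilbert–Schmidt brick: there are an orthonormal basis
`{e_k}` of `H` and nonnegative numbers `{ε_k}` with `Σ_k ε_k² < ∞` such that
`A ⊆ {x : |(x, e_k)| ≤ ε_k for all k}`. -/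
def CoveredByBrick {H : Type*} [NormedAddCommGroup H] [InnerProductSpace ℝ H]
    [CompleteSpace H] (A : Set H) : Prop :=
  ∃ (e : HilbertBasis ℕ ℝ H) (εs : ℕ → ℝ),
    (∀ k, 0 ≤ εs k) ∧ (Summable fun k => εs k ^ 2) ∧
    A ⊆ {x : H | ∀ k : ℕ, |⟪x, e k⟫| ≤ εs k}

/-- If `A ⊆ H` can be covered by a Hilbert–Schmidt brick and `C` is a bounded subset of a
finite-dimensional subspace of `H`, then the Minkowski sum `A + C` can be covered by a
Hilbert–Schmidt brick. -/
theorem coveredByBrick_add_bounded_finiteDimensional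
    {H : Type*} [NormedAddCommGroup H] [InnerProductSpace ℝ H] [CompleteSpace H]
    (A C : Set H) (hA : CoveredByBrick A) (hCbdd : Bornology.IsBounded C)
    (hCfin : ∃ V : Submodule ℝ H, FiniteDimensional ℝ V ∧ C ⊆ (V : Set H)) :
    CoveredByBrick (A + C) := by
  obtain ⟨e, εs, hεs0, hεssum, hAsub⟩ := hA
  obtain ⟨V, hVfin, hCV⟩ := hCfin
  obtain ⟨M, hM0, hMC⟩ : ∃ M, 0 ≤ M ∧ ∀ c ∈ C, ‖c‖ ≤ M := by
    obtain ⟨M, hM⟩ := hCbdd.exists_norm_le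
    exact ⟨max M 0, le_max_right _ _, fun c hc => (hM c hc).trans (le_max_left _ _)⟩
  set n := Module.finrank ℝ V with hn
  let f := stdOrthonormalBasis ℝ V
  set δ : ℕ → ℝ := fun k => M * ∑ i : Fin n, |⟪((f i : V) : H), e k⟫| with hδ
  have hδ0 : ∀ k, 0 ≤ δ k := fun k =>
    mul_nonneg hM0 (Finset.sum_nonneg fun i _ => abs_nonneg _)
  -- summability of inner products with each basis vector squared
  have hsumi : ∀ i : Fin n, Summable fun k => ⟪((f i : V) : H), e k⟫ ^ 2 := by
    intro i
    have := (e.hasSum_inner_mul_inner ((f i : V) : H) ((f i : V) : H)).summable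
    refine this.congr fun k => ?_
    rw [sq, real_inner_comm]
  have hδsum : Summable fun k => δ k ^ 2 := by
    have hbig : Summable fun k =>
        M ^ 2 * ((n : ℝ) * ∑ i : Fin n, ⟪((f i : V) : H), e k⟫ ^ 2) := by
      refine Summable.mul_left _ ?_
      refine Summable.mul_left _ ?_
      exact summable_sum fun i _ => hsumi i
    refine Summable.of_nonneg_of_le (fun k => sq_nonneg _) (fun k => ?_) hbig
    rw [hδ]
    rw [mul_pow]
    refine mul_le_mul_of_nonneg_left ?_ (sq_nonneg M)
    have := sq_sum_le_card_mul_sum_sq (s := (Finset.univ : Finset (Fin n)))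
      (f := fun i => |⟪((f i : V) : H), e k⟫|)
    simpa [sq_abs] using this
  refine ⟨e, fun k => εs k + δ k, fun k => add_nonneg (hεs0 k) (hδ0 k), ?_, ?_⟩
  · have hbig : Summable fun k => 2 * εs k ^ 2 + 2 * δ k ^ 2 :=
      ((hεssum.mul_left 2).add (hδsum.mul_left 2))
    refine Summable.of_nonneg_of_le (fun k => sq_nonneg _) (fun k => ?_) hbig
    show (εs k + δ k) ^ 2 ≤ 2 * εs k ^ 2 + 2 * δ k ^ 2
    nlinarith [sq_nonneg (εs k - δ k)]
  · rintro x hx k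
    rw [Set.mem_add] at hx
    obtain ⟨a, ha, c, hc, rfl⟩ := hx
    have hδc : |⟪c, e k⟫| ≤ δ k := by
      set c' : V := ⟨c, hCV hc⟩ with hc'
      have hrepr : (c' : H) = ∑ i : Fin n, ⟪((f i : V) : H), c⟫ • ((f i : V) : H) := by
        conv_lhs => rw [← f.sum_repr' c']
        push_cast
        rfl
      have hinner : ⟪c, e k⟫ = ∑ i : Fin n, ⟪((f i : V) : H), c⟫ * ⟪((f i : V) : H), e k⟫ := by
        conv_lhs => rw [show c = (c' : H) from rfl, hrepr]
        rw [sum_inner]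
        simp [real_inner_smul_left]
      rw [hinner, hδ]
      calc |∑ i : Fin n, ⟪((f i : V) : H), c⟫ * ⟪((f i : V) : H), e k⟫|
          ≤ ∑ i : Fin n, |⟪((f i : V) : H), c⟫ * ⟪((f i : V) : H), e k⟫| :=
            Finset.abs_sum_le_sum_abs _ _
        _ ≤ ∑ i : Fin n, M * |⟪((f i : V) : H), e k⟫| := by
            refine Finset.sum_le_sum fun i _ => ?_
            rw [abs_mul]
            refine mul_le_mul_of_nonneg_right ?_ (abs_nonneg _)
            calc |⟪((f i : V) : H), c⟫| ≤ ‖((f i : V) : H)‖ * ‖c‖ :=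
                  abs_real_inner_le_norm _ _
              _ ≤ 1 * M := by
                  have h1 : ‖((f i : V) : H)‖ = 1 := by
                    rw [Submodule.norm_coe]
                    exact f.orthonormal.1 i
                  rw [h1]
                  exact mul_le_mul_of_nonneg_left (hMC c hc) zero_le_one
              _ = M := one_mul M
        _ = M * ∑ i : Fin n, |⟪((f i : V) : H), e k⟫| := by rw [Finset.mul_sum]
    calc |⟪a + c, e k⟫| = |⟪a, e k⟫ + ⟪c, e k⟫| := by rw [inner_add_left]
      _ ≤ |⟪a, e k⟫| + |⟪c, e k⟫| := abs_add_le _ _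
      _ ≤ εs k + δ k := add_le_add (hAsub ha k) hδc
end

section
/- Let H be a real separable Hilbert space, let Q : H → H be a continuous linear projection (Q² = Q) whose kernel is finite-dimensional, and let K = K({e_k},{ε_k}) be a Hilbert–Schmidt brick in H. Then the image Q(K) can be covered by a Hilbert–Schmidt brick. -/
set_option maxHeartbeats 2000000


open scoped RealInnerProductSpace

/-- If `Q` is a continuous linear projection of `H` with finite-dimensional kernel and
`K = K({e_k},{ε_k})` is a Hilbert–Schmidt brick, then `Q(K)` can be covered by a
Hilbert–Schmidt brick. -/
theorem coveredByBrick_image_projection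
    {H : Type*} [NormedAddCommGroup H] [InnerProductSpace ℝ H] [CompleteSpace H]
    (Q : H →L[ℝ] H) (hQ : ∀ x, Q (Q x) = Q x)
    (hker : FiniteDimensional ℝ (LinearMap.ker (Q : H →ₗ[ℝ] H)))
    (e : HilbertBasis ℕ ℝ H) (εs : ℕ → ℝ) (hεs : ∀ k, 0 ≤ εs k)
    (hsum : Summable fun k => εs k ^ 2) :
    CoveredByBrick (Q '' {x : H | ∀ k : ℕ, |⟪x, e k⟫| ≤ εs k}) := by
  classical
  set W : Submodule ℝ H := LinearMap.ker (Q : H →ₗ[ℝ] H) with hW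
  haveI : FiniteDimensional ℝ W := hker
  set P := W.orthogonalProjectionOnto with hP
  set g : ℕ → ℝ := fun k => ‖(P (e k) : H)‖ with hg
  set S : ℝ := ∑' k, εs k ^ 2 with hS
  have hS0 : 0 ≤ S := tsum_nonneg fun k => sq_nonneg _
  set R : ℝ := (1 + ‖Q‖) * Real.sqrt S with hR
  have hR0 : 0 ≤ R := mul_nonneg (by positivity) (Real.sqrt_nonneg _)
  -- Parseval: sum of ‖P e k‖² over k is finite
  set n := Module.finrank ℝ W
  set f := stdOrthonormalBasis ℝ W with hf
  have hgsq : ∀ k, g k ^ 2 = ∑ i : Fin n, ⟪e k, (f i : H)⟫ ^ 2 := by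
    intro k
    have h1 : (g k) ^ 2 = ⟪P (e k), P (e k)⟫ := by
      rw [real_inner_self_eq_norm_sq]
      simp [hg, sq]
    rw [h1, ← f.sum_inner_mul_inner (P (e k)) (P (e k))]
    congr 1
    ext i
    have hfi : ((P ((f i : H)) : W) : H) = (f i : H) :=
      by have := W.starProjection_eq_self_iff.mpr (f i).2; exact this
    have h2 : ⟪((P (e k) : W) : H), (f i : H)⟫ = ⟪e k, ((P ((f i : H)) : W) : H)⟫ :=
      Submodule.inner_starProjection_left_eq_right W (e k) (f i)
    have h3 : ⟪P (e k), f i⟫ = ⟪((P (e k) : W) : H), ((f i : W) : H)⟫ := rfl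
    have h4 : ⟪f i, P (e k)⟫ = ⟪P (e k), f i⟫ := real_inner_comm _ _
    rw [h4, h3, h2, hfi, sq]
  have hgsum : Summable fun k => g k ^ 2 := by
    have : Summable fun k => ∑ i : Fin n, ⟪e k, (f i : H)⟫ ^ 2 := by
      apply summable_sum
      intro i _
      have := (e.hasSum_inner_mul_inner (f i : H) (f i : H)).summable
      refine this.congr fun k => ?_
      rw [sq, real_inner_comm]
    exact this.congr fun k => (hgsq k).symm
  have hg0 : ∀ k, 0 ≤ g k := fun k => norm_nonneg _
  have hmem : ∀ x : H, (∀ j : ℕ, |⟪x, e j⟫| ≤ εs j) → ∀ k : ℕ,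
      |⟪Q x, e k⟫| ≤ εs k + R * g k := by
    intro x hx k
    -- bound on ‖x‖
    have hxsq : HasSum (fun j => ⟪x, e j⟫ ^ 2) ⟪x, x⟫ := by
      have := e.hasSum_inner_mul_inner x x
      refine this.congr_fun fun j => ?_
      rw [sq, real_inner_comm x (e j)]
    have hxS : ‖x‖ ^ 2 ≤ S := by
      rw [← real_inner_self_eq_norm_sq, ← hxsq.tsum_eq]
      refine hxsq.summable.tsum_le_tsum (fun j => ?_) hsum
      have := hx j
      nlinarith [abs_nonneg ⟪x, e j⟫, sq_abs ⟪x, e j⟫, hεs j]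
    have hxn : ‖x‖ ≤ Real.sqrt S := by
      rw [show Real.sqrt S = Real.sqrt S from rfl]
      have := Real.sqrt_le_sqrt hxS
      rwa [Real.sqrt_sq (norm_nonneg x)] at this
    -- y := x - Q x lies in the kernel
    set y : H := x - Q x with hy
    have hyW : y ∈ W := by
      simp only [hW, LinearMap.mem_ker]
      show Q (x - Q x) = 0
      rw [map_sub, hQ]; simp
    have hyn : ‖y‖ ≤ R := by
      have h1 : ‖y‖ ≤ ‖x‖ + ‖Q x‖ := norm_sub_le _ _
      have h2 : ‖Q x‖ ≤ ‖Q‖ * ‖x‖ := Q.le_opNorm x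
      have h3 : ‖x‖ + ‖Q‖ * ‖x‖ = (1 + ‖Q‖) * ‖x‖ := by ring
      calc ‖y‖ ≤ (1 + ‖Q‖) * ‖x‖ := by linarith
        _ ≤ R := by
            rw [hR]
            exact mul_le_mul_of_nonneg_left hxn (by positivity)
    -- inner product bound
    have hQx : ⟪Q x, e k⟫ = ⟪x, e k⟫ - ⟪y, e k⟫ := by
      rw [hy, inner_sub_left]; ring
    have hyk : |⟪y, e k⟫| ≤ R * g k := by
      have hPy : ((P y : W) : H) = y := by have := W.starProjection_eq_self_iff.mpr hyW; exact this
      have h2 : ⟪y, e k⟫ = ⟪y, ((P (e k) : W) : H)⟫ := by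
        conv_lhs => rw [← hPy]
        exact Submodule.inner_starProjection_left_eq_right W y (e k)
      rw [h2]
      calc |⟪y, ((P (e k) : W) : H)⟫| ≤ ‖y‖ * ‖((P (e k) : W) : H)‖ :=
            abs_real_inner_le_norm _ _
        _ ≤ R * g k := by
            apply mul_le_mul hyn le_rfl (norm_nonneg _) hR0
    calc |⟪Q x, e k⟫| = |⟪x, e k⟫ - ⟪y, e k⟫| := by rw [hQx]
      _ ≤ |⟪x, e k⟫| + |⟪y, e k⟫| := abs_sub _ _
      _ ≤ εs k + R * g k := add_le_add (hx k) hyk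

  clear_value g S R
  clear hgsq hg hf hP hW hS hR hQ hker
  clear_value W P
  refine ⟨e, fun k => εs k + R * g k,
    fun k => add_nonneg (hεs k) (mul_nonneg hR0 (hg0 k)), ?_, ?_⟩
  · refine Summable.of_nonneg_of_le (f := fun k => 2 * εs k ^ 2 + 2 * (R ^ 2 * g k ^ 2))
      (fun k => sq_nonneg _) (fun k => ?_)
      ((hsum.mul_left 2).add ((hgsum.mul_left (R ^ 2)).mul_left 2))
    simp only
    nlinarith [sq_nonneg (εs k - R * g k), sq_nonneg (R * g k), mul_pow R (g k) 2]
  · rintro z ⟨x, hx, rfl⟩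
    exact hmem x hx
end

section
/- Let f : ℝ² \ {0} → ℝ be defined by f(u) = ∫₀¹ (1/(2πt)) exp(−‖u‖²/(2t)) dt. Then there exist positive constants c₁, c₂, c₃, c₄ such that f(u) ≤ c₁ ln(‖u‖^{−1}) + c₂ for all 0 < ‖u‖ ≤ 1, and f(u) ≤ c₃ exp(−c₄ ‖u‖²) for all ‖u‖ > 1. -/
open MeasureTheory
open scoped Real

noncomputable section

/-- `f(u) = ∫₀¹ p_t(u) dt`, where `p_t(u) = (1/(2πt)) exp(-‖u‖²/(2t))` is the density of a
centered Gaussian vector in `ℝ²` with covariance matrix `t·I₂`. -/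
def greenKernel (u : ℝ × ℝ) : ℝ :=
  ∫ t in Set.Ioc (0 : ℝ) 1, (1 / (2 * Real.pi * t)) * Real.exp (-‖u‖ ^ 2 / (2 * t))

lemma exp_neg_le_inv {x : ℝ} (hx : 0 < x) : Real.exp (-x) ≤ x⁻¹ := by
  rw [Real.exp_neg]
  exact inv_anti₀ hx (le_trans (by linarith) (Real.add_one_le_exp x))

lemma pointwise_bound {r t : ℝ} (hr : 0 < r) (ht : 0 < t) :
    (1 / (2 * Real.pi * t)) * Real.exp (-r ^ 2 / (2 * t)) ≤ 1 / (Real.pi * r ^ 2) := by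
  have h1 : Real.exp (-r ^ 2 / (2 * t)) ≤ (r ^ 2 / (2 * t))⁻¹ := by
    rw [neg_div]
    exact exp_neg_le_inv (by positivity)
  calc (1 / (2 * Real.pi * t)) * Real.exp (-r ^ 2 / (2 * t))
      ≤ (1 / (2 * Real.pi * t)) * (r ^ 2 / (2 * t))⁻¹ := by
        apply mul_le_mul_of_nonneg_left h1 (by positivity)
    _ = 1 / (Real.pi * r ^ 2) := by
        have hpi := Real.pi_pos
        field_simp

lemma green_meas (r : ℝ) :
    Measurable (fun t : ℝ => (1 / (2 * Real.pi * t)) * Real.exp (-r ^ 2 / (2 * t))) := by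
  apply Measurable.mul
  · exact measurable_const.div (by fun_prop)
  · exact Real.measurable_exp.comp (measurable_const.div (by fun_prop))

lemma green_integrableOn {r : ℝ} (hr : 0 < r) :
    IntegrableOn (fun t : ℝ => (1 / (2 * Real.pi * t)) * Real.exp (-r ^ 2 / (2 * t)))
      (Set.Ioc (0 : ℝ) 1) := by
  apply Integrable.mono' (integrable_const (1 / (Real.pi * r ^ 2)))
    ((green_meas r).aestronglyMeasurable)
  rw [ae_restrict_iff' measurableSet_Ioc]
  filter_upwards with t ht
  obtain ⟨ht0, -⟩ := ht
  rw [Real.norm_eq_abs, abs_of_nonneg (by positivity)]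
  exact pointwise_bound hr ht0

/-- Bounds for `f(u) = ∫₀¹ p_t(u) dt`: there are positive constants `c₁, c₂, c₃, c₄` with
`f(u) ≤ c₁ ln(‖u‖⁻¹) + c₂` for `0 < ‖u‖ ≤ 1` and `f(u) ≤ c₃ exp(-c₄‖u‖²)` for `‖u‖ > 1`. -/
theorem greenKernel_bounds :
    ∃ c₁ c₂ c₃ c₄ : ℝ, 0 < c₁ ∧ 0 < c₂ ∧ 0 < c₃ ∧ 0 < c₄ ∧
      (∀ u : ℝ × ℝ, 0 < ‖u‖ → ‖u‖ ≤ 1 →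
        greenKernel u ≤ c₁ * Real.log (‖u‖⁻¹) + c₂) ∧
      (∀ u : ℝ × ℝ, 1 < ‖u‖ →
        greenKernel u ≤ c₃ * Real.exp (-c₄ * ‖u‖ ^ 2)) := by
  have hpi := Real.pi_pos
  have hpi3 := Real.pi_gt_three
  refine ⟨1, 1, 1, 1/4, one_pos, one_pos, one_pos, by norm_num, ?_, ?_⟩
  · -- small case
    intro u hr0 hr1
    set r := ‖u‖ with hrdef
    set s := r ^ 2 with hsdef
    have hs0 : 0 < s := by positivity
    have hs1 : s ≤ 1 := by
      rw [hsdef]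
      nlinarith
    have hInt := green_integrableOn hr0
    have hIntA : IntegrableOn (fun t : ℝ => (1 / (2 * Real.pi * t)) * Real.exp (-r ^ 2 / (2 * t)))
        (Set.Ioc (0 : ℝ) s) := hInt.mono_set (Set.Ioc_subset_Ioc le_rfl hs1)
    have hIntB : IntegrableOn (fun t : ℝ => (1 / (2 * Real.pi * t)) * Real.exp (-r ^ 2 / (2 * t)))
        (Set.Ioc s 1) := hInt.mono_set (Set.Ioc_subset_Ioc hs0.le le_rfl)
    have hsplit : greenKernel u =
        (∫ t in Set.Ioc (0 : ℝ) s, (1 / (2 * Real.pi * t)) * Real.exp (-r ^ 2 / (2 * t))) +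
        (∫ t in Set.Ioc s 1, (1 / (2 * Real.pi * t)) * Real.exp (-r ^ 2 / (2 * t))) := by
      rw [greenKernel, ← Set.Ioc_union_Ioc_eq_Ioc hs0.le hs1,
        setIntegral_union (Set.Ioc_disjoint_Ioc_of_le le_rfl) measurableSet_Ioc hIntA hIntB]
    have hA : (∫ t in Set.Ioc (0 : ℝ) s, (1 / (2 * Real.pi * t)) * Real.exp (-r ^ 2 / (2 * t)))
        ≤ 1 := by
      calc (∫ t in Set.Ioc (0 : ℝ) s, (1 / (2 * Real.pi * t)) * Real.exp (-r ^ 2 / (2 * t)))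
          ≤ ∫ _ in Set.Ioc (0 : ℝ) s, 1 / (Real.pi * r ^ 2) := by
            apply setIntegral_mono_on hIntA (integrableOn_const (by
              rw [Real.volume_Ioc]; exact ENNReal.ofReal_ne_top)) measurableSet_Ioc
            intro t ht
            exact pointwise_bound hr0 ht.1
        _ = s * (1 / (Real.pi * r ^ 2)) := by
            rw [setIntegral_const, measureReal_def, Real.volume_Ioc, smul_eq_mul,
              ENNReal.toReal_ofReal (by linarith)]
            ring
        _ = 1 / Real.pi := by
            rw [hsdef]
            field_simp
        _ ≤ 1 := by
            rw [div_le_one hpi]; linarith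
    have hB : (∫ t in Set.Ioc s 1, (1 / (2 * Real.pi * t)) * Real.exp (-r ^ 2 / (2 * t)))
        ≤ Real.log (r⁻¹) := by
      have hIntInv : IntervalIntegrable (fun t : ℝ => (1 / (2 * Real.pi)) * t⁻¹) volume s 1 := by
        apply IntervalIntegrable.const_mul
        apply intervalIntegral.intervalIntegrable_inv
        · intro x hx
          rw [Set.uIcc_of_le hs1] at hx
          exact ne_of_gt (lt_of_lt_of_le hs0 hx.1)
        · exact continuousOn_id
      have hIntInv' : IntegrableOn (fun t : ℝ => (1 / (2 * Real.pi)) * t⁻¹) (Set.Ioc s 1) :=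
        hIntInv.1
      calc (∫ t in Set.Ioc s 1, (1 / (2 * Real.pi * t)) * Real.exp (-r ^ 2 / (2 * t)))
          ≤ ∫ t in Set.Ioc s 1, (1 / (2 * Real.pi)) * t⁻¹ := by
            apply setIntegral_mono_on hIntB hIntInv' measurableSet_Ioc
            intro t ht
            have ht0 : 0 < t := lt_of_lt_of_le hs0 ht.1.le
            have hexp : Real.exp (-r ^ 2 / (2 * t)) ≤ 1 := by
              apply Real.exp_le_one_iff.2
              apply div_nonpos_of_nonpos_of_nonneg (neg_nonpos.2 (by positivity)) (by positivity)
            calc (1 / (2 * Real.pi * t)) * Real.exp (-r ^ 2 / (2 * t))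
                ≤ (1 / (2 * Real.pi * t)) * 1 := by
                  apply mul_le_mul_of_nonneg_left hexp (by positivity)
              _ = (1 / (2 * Real.pi)) * t⁻¹ := by field_simp
        _ = (1 / (2 * Real.pi)) * Real.log (1 / s) := by
            rw [← intervalIntegral.integral_of_le hs1,
              intervalIntegral.integral_const_mul, integral_inv_of_pos hs0 one_pos]
        _ = (1 / Real.pi) * Real.log (r⁻¹) := by
            rw [Real.log_inv]
            rw [show (1:ℝ)/s = (r^2)⁻¹ by rw [hsdef, one_div]]
            rw [Real.log_inv, Real.log_pow]
            push_cast
            ring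
        _ ≤ Real.log (r⁻¹) := by
            have hlog : 0 ≤ Real.log (r⁻¹) :=
              Real.log_nonneg ((one_le_inv₀ hr0).2 hr1)
            calc (1 / Real.pi) * Real.log (r⁻¹) ≤ 1 * Real.log (r⁻¹) :=
                  mul_le_mul_of_nonneg_right (by rw [div_le_one hpi]; linarith) hlog
              _ = Real.log (r⁻¹) := one_mul _
    rw [hsplit]
    have hlog : 0 ≤ Real.log (r⁻¹) :=
      Real.log_nonneg ((one_le_inv₀ hr0).2 hr1)
    linarith
  · -- large case
    intro u hr1
    set r := ‖u‖ with hrdef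
    have hr0 : 0 < r := lt_trans one_pos hr1
    have hr2 : 1 ≤ r ^ 2 := by nlinarith
    have hInt := green_integrableOn hr0
    have key : ∀ t ∈ Set.Ioc (0:ℝ) 1,
        (1 / (2 * Real.pi * t)) * Real.exp (-r ^ 2 / (2 * t))
          ≤ (2 / Real.pi) * Real.exp (-(1/4) * r ^ 2) := by
      intro t ht
      obtain ⟨ht0, ht1⟩ := ht
      have hsplitexp : Real.exp (-r ^ 2 / (2 * t))
          = Real.exp (-(r ^ 2 / (4 * t))) * Real.exp (-(r ^ 2 / (4 * t))) := by
        rw [← Real.exp_add]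
        congr 1
        field_simp
        ring
      have h1 : Real.exp (-(r ^ 2 / (4 * t))) ≤ (r ^ 2 / (4 * t))⁻¹ :=
        exp_neg_le_inv (by positivity)
      have h1' : (r ^ 2 / (4 * t))⁻¹ ≤ 4 * t := by
        rw [inv_div]
        exact div_le_self (by positivity) hr2
      have h2 : Real.exp (-(r ^ 2 / (4 * t))) ≤ Real.exp (-(1/4) * r ^ 2) := by
        apply Real.exp_le_exp.2
        rw [neg_mul, neg_le_neg_iff]
        rw [le_div_iff₀ (by positivity)]
        nlinarith
      calc (1 / (2 * Real.pi * t)) * Real.exp (-r ^ 2 / (2 * t))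
          = (1 / (2 * Real.pi * t)) * (Real.exp (-(r ^ 2 / (4 * t))) * Real.exp (-(r ^ 2 / (4 * t)))) := by
            rw [hsplitexp]
        _ ≤ (1 / (2 * Real.pi * t)) * ((4 * t) * Real.exp (-(1/4) * r ^ 2)) := by
            apply mul_le_mul_of_nonneg_left _ (by positivity)
            apply mul_le_mul (h1.trans h1') h2 (Real.exp_pos _).le (by positivity)
        _ = (2 / Real.pi) * Real.exp (-(1/4) * r ^ 2) := by
            field_simp
            ring
    calc greenKernel u
        ≤ ∫ _ in Set.Ioc (0:ℝ) 1, (2 / Real.pi) * Real.exp (-(1/4) * r ^ 2) := by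
          rw [greenKernel]
          apply setIntegral_mono_on hInt (integrableOn_const (by
            rw [Real.volume_Ioc]; exact ENNReal.ofReal_ne_top)) measurableSet_Ioc key
      _ = (2 / Real.pi) * Real.exp (-(1/4) * r ^ 2) := by
          rw [setIntegral_const, measureReal_def, Real.volume_Ioc, smul_eq_mul]
          norm_num
      _ ≤ 1 * Real.exp (-(1/4) * r ^ 2) := by
          apply mul_le_mul_of_nonneg_right _ (Real.exp_pos _).le
          rw [div_le_one hpi]; linarith
end
end
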